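/- arXiv:1906.01206 — 13 statements merged into one kernel-verified Lean document; each statement's English description precedes it below -/
import Mathlib

section
/- Let ξ₂ = θ α K (1-c)/(1 + α K (1-c) h) - d. Assume θ > θ1 (so in particular θ > h d). Then ξ₂ < 0 if and only if c > c1, and ξ₂ > 0 if and only if c < c1. Moreover, if c > c1, then both eigenvalues -r and ξ₂ of the Jacobian of f at the predator-free equilibrium (K, 0), regarded as complex numbers, satisfy |arg(ξ)| = π > mπ/2 for every m ∈ (0, 1]. -/
/-- Sign of the eigenvalue ξ₂ of the Jacobian at the predator-free
equilibrium (K,0) in terms of the complexity threshold c₁, and the argument condition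
|arg ξ| = π > mπ/2 for both eigenvalues when c > c₁. -/
theorem predator_free_eigenvalues
    (r K α h d θ c ξ₂ : ℝ)
    (hr : 0 < r) (hK : 0 < K) (hα : 0 < α) (hh : 0 < h) (hd : 0 < d)
    (hθ0 : 0 < θ) (hθlt : θ < 1) (hc0 : 0 < c) (hclt : c < 1)
    (hθ1 : θ > h * d + d / (α * K))
    (hξ2 : ξ₂ = θ * α * K * (1 - c) / (1 + α * K * (1 - c) * h) - d) :
    (ξ₂ < 0 ↔ c > 1 - d / (α * K * (θ - h * d))) ∧
    (ξ₂ > 0 ↔ c < 1 - d / (α * K * (θ - h * d))) ∧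
    (c > 1 - d / (α * K * (θ - h * d)) →
      |Complex.arg ((-r : ℝ) : ℂ)| = Real.pi ∧
      |Complex.arg ((ξ₂ : ℝ) : ℂ)| = Real.pi ∧
      ∀ m : ℝ, 0 < m → m ≤ 1 → m * Real.pi / 2 < Real.pi) := by
  have h1c : (0:ℝ) < 1 - c := by linarith
  have hden1 : (0:ℝ) < 1 + α * K * (1 - c) * h := by
    nlinarith [mul_pos (mul_pos (mul_pos hα hK) h1c) hh]
  have hθhd : 0 < θ - h * d := by
    have : 0 < d / (α * K) := by positivity
    linarith
  have hD : 0 < α * K * (θ - h * d) := by positivity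
  have key1 : ξ₂ < 0 ↔ c > 1 - d / (α * K * (θ - h * d)) := by
    rw [hξ2, sub_neg, div_lt_iff₀ hden1, gt_iff_lt, sub_lt_comm, lt_div_iff₀ hD]
    constructor <;> intro h' <;> nlinarith
  have key2 : ξ₂ > 0 ↔ c < 1 - d / (α * K * (θ - h * d)) := by
    rw [hξ2, gt_iff_lt, sub_pos, lt_div_iff₀ hden1, lt_sub_comm, div_lt_iff₀ hD]
    constructor <;> intro h' <;> nlinarith
  refine ⟨key1, key2, fun hc => ?_⟩
  have hξneg : ξ₂ < 0 := key1.mpr hc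
  have hrneg : (-r : ℝ) < 0 := by linarith
  refine ⟨?_, ?_, fun m hm0 hm1 => ?_⟩
  · rw [Complex.arg_ofReal_of_neg hrneg, abs_of_pos Real.pi_pos]
  · rw [Complex.arg_ofReal_of_neg hξneg, abs_of_pos Real.pi_pos]
  · nlinarith [Real.pi_pos]
end

section
/- For all real x > 0 and y ≥ 0, the Lyapunov-derivative expression for the predator-free equilibrium satisfies ((x - K)/x)·(r x (1 - x/K) - α(1-c) x y/(1 + α(1-c) h x)) + (1/θ)·(θ α(1-c) x y/(1 + α(1-c) h x) - d y) ≤ -(r/K)(x - K)² + (α K (1-c) - d/θ) y. In particular, if α K (1-c) ≤ d/θ, then the left-hand side is ≤ 0 for all x > 0, y ≥ 0. -/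
/-!
With `V(x, y) = x - K - K log (x / K) + y / θ`, the expression below is `V̇` along the
Holling type II predator–prey flow. Clearing `x` and `θ`, the prey terms collapse to
`-(r / K) (x - K)²` and the predation terms to `α (1 - c) K y / (1 + α (1 - c) h x) - (d / θ) y`;
the handling-time denominator is at least `1`, so the predation gain is at most `α K (1 - c) y`.
-/

noncomputable def predatorFreeLyapunovDeriv (r K α h d θ c x y : ℝ) : ℝ :=
  ((x - K) / x) * (r * x * (1 - x / K) - α * (1 - c) * x * y / (1 + α * (1 - c) * h * x)) +
    (1 / θ) * (θ * α * (1 - c) * x * y / (1 + α * (1 - c) * h * x) - d * y)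

section

variable {r K α h d θ c x y : ℝ}

/-- No condition on the denominator is needed: where it vanishes, both sides drop the
predation terms since `_ / 0 = 0`. -/
theorem predatorFreeLyapunovDeriv_eq (hx : x ≠ 0) (hK : K ≠ 0) (hθ : θ ≠ 0) :
    predatorFreeLyapunovDeriv r K α h d θ c x y =
      -(r / K) * (x - K) ^ 2 + α * (1 - c) * K * y / (1 + α * (1 - c) * h * x) - d / θ * y := by
  unfold predatorFreeLyapunovDeriv
  field_simp
  ring

theorem predatorFreeLyapunovDeriv_le (hK : 0 < K) (hα : 0 ≤ α) (hh : 0 ≤ h) (hθ : θ ≠ 0)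
    (hc : c < 1) (hx : 0 < x) (hy : 0 ≤ y) :
    predatorFreeLyapunovDeriv r K α h d θ c x y ≤
      -(r / K) * (x - K) ^ 2 + (α * K * (1 - c) - d / θ) * y := by
  have ha : 0 ≤ α * (1 - c) := mul_nonneg hα (sub_nonneg.mpr hc.le)
  have hgain : α * (1 - c) * K * y / (1 + α * (1 - c) * h * x) ≤ α * (1 - c) * K * y :=
    div_le_self (by positivity) (le_add_of_nonneg_right (by positivity))
  rw [predatorFreeLyapunovDeriv_eq hx.ne' hK.ne' hθ]
  linarith

theorem predatorFreeLyapunovDeriv_nonpos (hr : 0 ≤ r) (hK : 0 < K) (hα : 0 ≤ α) (hh : 0 ≤ h)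
    (hθ : θ ≠ 0) (hc : c < 1) (hx : 0 < x) (hy : 0 ≤ y) (hgrowth : α * K * (1 - c) ≤ d / θ) :
    predatorFreeLyapunovDeriv r K α h d θ c x y ≤ 0 := by
  have hprey : -(r / K) * (x - K) ^ 2 ≤ 0 :=
    mul_nonpos_of_nonpos_of_nonneg (neg_nonpos.mpr (by positivity)) (sq_nonneg _)
  have hpred : (α * K * (1 - c) - d / θ) * y ≤ 0 :=
    mul_nonpos_of_nonpos_of_nonneg (sub_nonpos.mpr hgrowth) hy
  linarith [predatorFreeLyapunovDeriv_le (r := r) (d := d) hK hα hh hθ hc hx hy]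

end

theorem lyapunov_estimate_predator_free_general
    (r K α h d θ c : ℝ)
    (hr : 0 < r) (hK : 0 < K) (hα : 0 < α) (hh : 0 < h)
    (hθ0 : 0 < θ) (hclt : c < 1) :
    (∀ x y : ℝ, 0 < x → 0 ≤ y →
      ((x - K) / x) * (r * x * (1 - x / K) - α * (1 - c) * x * y / (1 + α * (1 - c) * h * x)) +
        (1 / θ) * (θ * α * (1 - c) * x * y / (1 + α * (1 - c) * h * x) - d * y) ≤
      -(r / K) * (x - K) ^ 2 + (α * K * (1 - c) - d / θ) * y) ∧
    (α * K * (1 - c) ≤ d / θ →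
      ∀ x y : ℝ, 0 < x → 0 ≤ y →
        ((x - K) / x) * (r * x * (1 - x / K) - α * (1 - c) * x * y / (1 + α * (1 - c) * h * x)) +
          (1 / θ) * (θ * α * (1 - c) * x * y / (1 + α * (1 - c) * h * x) - d * y) ≤ 0) :=
  ⟨fun _ _ hx hy => predatorFreeLyapunovDeriv_le hK hα.le hh.le hθ0.ne' hclt hx hy,
    fun hgrowth _ _ hx hy =>
      predatorFreeLyapunovDeriv_nonpos hr.le hK hα.le hh.le hθ0.ne' hclt hx hy hgrowth⟩

/-- Lyapunov-derivative estimate for the predator-free equilibrium (K,0),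
and nonpositivity of the Lyapunov derivative when αK(1-c) ≤ d/θ. -/
theorem lyapunov_estimate_predator_free
    (r K α h d θ c : ℝ)
    (hr : 0 < r) (hK : 0 < K) (hα : 0 < α) (hh : 0 < h) (hd : 0 < d)
    (hθ0 : 0 < θ) (hθlt : θ < 1) (hc0 : 0 < c) (hclt : c < 1) :
    (∀ x y : ℝ, 0 < x → 0 ≤ y →
      ((x - K) / x) * (r * x * (1 - x / K) - α * (1 - c) * x * y / (1 + α * (1 - c) * h * x)) +
        (1 / θ) * (θ * α * (1 - c) * x * y / (1 + α * (1 - c) * h * x) - d * y) ≤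
      -(r / K) * (x - K) ^ 2 + (α * K * (1 - c) - d / θ) * y) ∧
    (α * K * (1 - c) ≤ d / θ →
      ∀ x y : ℝ, 0 < x → 0 ≤ y →
        ((x - K) / x) * (r * x * (1 - x / K) - α * (1 - c) * x * y / (1 + α * (1 - c) * h * x)) +
          (1 / θ) * (θ * α * (1 - c) * x * y / (1 + α * (1 - c) * h * x) - d * y) ≤ 0) :=
  lyapunov_estimate_predator_free_general r K α h d θ c hr hK hα hh hθ0 hclt
end

section
/- Set T = r d (α h K (1-c) - 1 - 2 α h (1-c) x*)/(α θ K (1-c)) and D = r d (α K (1-c)(θ - h d) - d)/(K α θ (1-c)) (the trace and determinant of the Jacobian of f at (x*, y*)). Assume θ > θ1, θ > θ2, α > 1/(K h), and c2 < c < c1. Then D > 0 and T < 0, and consequently every complex root ξ of ξ² - T ξ + D = 0 satisfies |arg(ξ)| > mπ/2 for every m ∈ (0, 1]. -/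
/-!
Since `ξ² - Tξ + D` has real coefficients, a non-real root has real part `T / 2`, and a real
root cannot be nonnegative because the polynomial is at least `D > 0` on `[0, ∞)` when `T < 0`.
So every root lies in the open left half-plane, where `|arg ξ| > π / 2 ≥ m π / 2`.
The signs of `D` and `T` are the conditions `c < c₁` and `c > c₂` with the denominators cleared.
-/

open Complex

theorem Complex.re_neg_of_sq_sub_mul_add_eq_zero {T D : ℝ} (hT : T < 0) (hD : 0 < D) {ξ : ℂ}
    (hξ : ξ ^ 2 - T * ξ + D = 0) : ξ.re < 0 := by
  have hre := congrArg re hξ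
  have him := congrArg im hξ
  simp only [sq, sub_re, add_re, mul_re, ofReal_re, ofReal_im, zero_re, sub_im, add_im, mul_im,
    zero_im] at hre him
  rcases mul_eq_zero.mp (show ξ.im * (2 * ξ.re - T) = 0 by linarith) with h_real | h_half
  · rw [h_real] at hre
    by_contra! hnonneg
    nlinarith [mul_nonneg hnonneg hnonneg, mul_nonneg (neg_nonneg.mpr hT.le) hnonneg]
  · linarith

theorem Complex.mul_pi_div_two_lt_abs_arg_of_re_neg {ξ : ℂ} (hξ : ξ.re < 0) {m : ℝ}
    (hm : m ≤ 1) : m * Real.pi / 2 < |ξ.arg| := by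
  have h_half_pi : Real.pi / 2 < |ξ.arg| :=
    lt_of_not_ge fun h => hξ.not_ge (abs_arg_le_pi_div_two_iff.mp h)
  have : m * Real.pi / 2 ≤ Real.pi / 2 := by
    gcongr
    exact mul_le_of_le_one_left Real.pi_pos.le hm
  linarith

section Thresholds

variable {K α h d θ c : ℝ}

theorem sub_pos_of_gt_theta₁ (hK : 0 < K) (hα : 0 < α) (hd : 0 < d)
    (hθ₁ : θ > h * d + d / (α * K)) : 0 < θ - h * d := by
  have : 0 < d / (α * K) := by positivity
  linarith

theorem det_numerator_pos_of_lt_c₁ (hK : 0 < K) (hα : 0 < α) (hd : 0 < d)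
    (hθ₁ : θ > h * d + d / (α * K)) (hc₁ : c < 1 - d / (α * K * (θ - h * d))) :
    0 < α * K * (1 - c) * (θ - h * d) - d := by
  have hg := sub_pos_of_gt_theta₁ hK hα hd hθ₁
  have h_lt : d / (α * K * (θ - h * d)) < 1 - c := by linarith
  rw [div_lt_iff₀ (by positivity)] at h_lt
  linarith

theorem trace_numerator_neg_of_gt_c₂ (hK : 0 < K) (hα : 0 < α) (hh : 0 < h) (hd : 0 < d)
    (hc : c < 1) (hθ₁ : θ > h * d + d / (α * K))
    (hc₂ : c > 1 - (θ + h * d) / (α * K * h * (θ - h * d))) :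
    α * h * K * (1 - c) - 1 - 2 * α * h * (1 - c) * (d / (α * (1 - c) * (θ - h * d))) < 0 := by
  have hg := sub_pos_of_gt_theta₁ hK hα hd hθ₁
  have h_lt : 1 - c < (θ + h * d) / (α * K * h * (θ - h * d)) := by linarith
  rw [lt_div_iff₀ (by positivity)] at h_lt
  have h_xs : 2 * α * h * (1 - c) * (d / (α * (1 - c) * (θ - h * d))) =
      2 * h * d / (θ - h * d) := by
    field_simp [(sub_pos.mpr hc).ne']
  rw [h_xs, sub_neg, lt_div_iff₀ hg]
  nlinarith

end Thresholds

theorem interior_stable_all_orders_general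
    (r K α h d θ c xs T D : ℝ)
    (hr : 0 < r) (hK : 0 < K) (hα : 0 < α) (hh : 0 < h) (hd : 0 < d)
    (hθ0 : 0 < θ) (hclt : c < 1)
    (hθ1 : θ > h * d + d / (α * K))
    (hc2 : c > 1 - (θ + h * d) / (α * K * h * (θ - h * d)))
    (hc1 : c < 1 - d / (α * K * (θ - h * d)))
    (hxs : xs = d / (α * (1 - c) * (θ - h * d)))
    (hT : T = r * d * (α * h * K * (1 - c) - 1 - 2 * α * h * (1 - c) * xs) / (α * θ * K * (1 - c)))
    (hD : D = r * d * (α * K * (1 - c) * (θ - h * d) - d) / (K * α * θ * (1 - c))) :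
    0 < D ∧ T < 0 ∧
      ∀ ξ : ℂ, ξ ^ 2 - (T : ℂ) * ξ + (D : ℂ) = 0 →
        ∀ m : ℝ, 0 < m → m ≤ 1 → m * Real.pi / 2 < |ξ.arg| := by
  have h1c : 0 < 1 - c := sub_pos.mpr hclt
  have hD_pos : 0 < D := by
    rw [hD]
    have := det_numerator_pos_of_lt_c₁ hK hα hd hθ1 hc1
    positivity
  have hT_neg : T < 0 := by
    rw [hT, hxs]
    have := trace_numerator_neg_of_gt_c₂ hK hα hh hd hclt hθ1 hc2
    exact div_neg_of_neg_of_pos (mul_neg_of_pos_of_neg (mul_pos hr hd) this) (by positivity)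
  refine ⟨hD_pos, hT_neg, fun ξ hξ m _ hm => ?_⟩
  exact mul_pi_div_two_lt_abs_arg_of_re_neg (re_neg_of_sq_sub_mul_add_eq_zero hT_neg hD_pos hξ) hm

/-- If θ > θ₁, θ > θ₂, α > 1/(Kh) and c₂ < c < c₁, then the determinant D of
the Jacobian at the interior equilibrium is positive, its trace T is negative, and every
complex root ξ of ξ² - Tξ + D = 0 satisfies |arg ξ| > mπ/2 for all m ∈ (0,1]. -/
theorem interior_stable_all_orders
    (r K α h d θ c xs T D : ℝ)
    (hr : 0 < r) (hK : 0 < K) (hα : 0 < α) (hh : 0 < h) (hd : 0 < d)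
    (hθ0 : 0 < θ) (hθlt : θ < 1) (hc0 : 0 < c) (hclt : c < 1)
    (hθ1 : θ > h * d + d / (α * K))
    (hθ2 : θ > h * d * (α * K * h + 1) / (α * K * h - 1))
    (hα' : α > 1 / (K * h))
    (hc2 : c > 1 - (θ + h * d) / (α * K * h * (θ - h * d)))
    (hc1 : c < 1 - d / (α * K * (θ - h * d)))
    (hxs : xs = d / (α * (1 - c) * (θ - h * d)))
    (hT : T = r * d * (α * h * K * (1 - c) - 1 - 2 * α * h * (1 - c) * xs) / (α * θ * K * (1 - c)))
    (hD : D = r * d * (α * K * (1 - c) * (θ - h * d) - d) / (K * α * θ * (1 - c))) :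
    0 < D ∧ T < 0 ∧
      ∀ ξ : ℂ, ξ ^ 2 - (T : ℂ) * ξ + (D : ℂ) = 0 →
        ∀ m : ℝ, 0 < m → m ≤ 1 → m * Real.pi / 2 < |ξ.arg| :=
  interior_stable_all_orders_general r K α h d θ c xs T D hr hK hα hh hd hθ0 hclt hθ1 hc2 hc1 hxs hT
    hD
end

section
/- Set T = r d (α h K (1-c) - 1 - 2 α h (1-c) x*)/(α θ K (1-c)) and D = r d (α K (1-c)(θ - h d) - d)/(K α θ (1-c)) (the trace and determinant of the Jacobian of f at (x*, y*)). Assume θ > θ1, θ > θ2, α > 1/(K h), and 0 < c < c2. Then T > 0 and D > 0. -/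
/-!
Clearing the denominator of `c < c₂` gives the key inequality
`θ + h d < α (1 - c) K h (θ - h d)`. Since `α (1 - c) h x* = h d / (θ - h d)`, multiplying the
numerator of `T` by `θ - h d > 0` (positive because `θ > θ₁`) turns it into exactly this
inequality, and multiplying the numerator of `D` by `h` yields it with `θ` dropped from the left.
-/

lemma lt_one_sub_mul_of_lt_one_sub_div {p q c : ℝ} (hq : 0 < q) (h : c < 1 - p / q) :
    p < (1 - c) * q := by
  rwa [lt_sub_comm, div_lt_iff₀ hq] at h

section PredatorPrey

variable {K α h d θ c : ℝ}

lemma trace_numerator_pos (hα : 0 < α) (hc : c < 1) (hs : 0 < θ - h * d)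
    (hkey : θ + h * d < (1 - c) * (α * K * h * (θ - h * d))) :
    0 < α * h * K * (1 - c) - 1 - 2 * α * h * (1 - c) * (d / (α * (1 - c) * (θ - h * d))) := by
  have hm : 1 - c ≠ 0 := (sub_pos.2 hc).ne'
  have hsum : α * h * K * (1 - c) - 1 - 2 * α * h * (1 - c) * (d / (α * (1 - c) * (θ - h * d)))
      = ((1 - c) * (α * K * h * (θ - h * d)) - (θ + h * d)) / (θ - h * d) := by
    field_simp [hα.ne', hs.ne']
    ring
  rw [hsum]
  exact div_pos (sub_pos.2 hkey) hs

lemma determinant_numerator_pos (hh : 0 < h) (hθ : 0 < θ)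
    (hkey : θ + h * d < (1 - c) * (α * K * h * (θ - h * d))) :
    0 < α * K * (1 - c) * (θ - h * d) - d := by
  have : 0 < h * (α * K * (1 - c) * (θ - h * d) - d) := by nlinarith
  exact pos_of_mul_pos_right this hh.le

end PredatorPrey

theorem interior_trace_det_low_complexity_general
    (r K α h d θ c xs T D : ℝ)
    (hr : 0 < r) (hK : 0 < K) (hα : 0 < α) (hh : 0 < h) (hd : 0 < d)
    (hθ0 : 0 < θ) (hclt : c < 1)
    (hθ1 : θ > h * d + d / (α * K))
    (hc2 : c < 1 - (θ + h * d) / (α * K * h * (θ - h * d)))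
    (hxs : xs = d / (α * (1 - c) * (θ - h * d)))
    (hT : T = r * d * (α * h * K * (1 - c) - 1 - 2 * α * h * (1 - c) * xs) / (α * θ * K * (1 - c)))
    (hD : D = r * d * (α * K * (1 - c) * (θ - h * d) - d) / (K * α * θ * (1 - c))) :
    0 < T ∧ 0 < D := by
  have hs : 0 < θ - h * d := by
    have := div_pos hd (mul_pos hα hK)
    linarith
  have hkey := lt_one_sub_mul_of_lt_one_sub_div (by positivity) hc2
  subst hxs hT hD
  constructor
  · exact div_pos (mul_pos (mul_pos hr hd) (trace_numerator_pos hα hclt hs hkey)) (by positivity)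
  · exact div_pos (mul_pos (mul_pos hr hd) (determinant_numerator_pos hh hθ0 hkey))
      (by positivity)

/-- If θ > θ₁, θ > θ₂, α > 1/(Kh) and 0 < c < c₂, then the trace T of the
Jacobian at the interior equilibrium is positive and the determinant D is positive. -/
theorem interior_trace_det_low_complexity
    (r K α h d θ c xs T D : ℝ)
    (hr : 0 < r) (hK : 0 < K) (hα : 0 < α) (hh : 0 < h) (hd : 0 < d)
    (hθ0 : 0 < θ) (hθlt : θ < 1) (hc0 : 0 < c) (hclt : c < 1)
    (hθ1 : θ > h * d + d / (α * K))
    (hθ2 : θ > h * d * (α * K * h + 1) / (α * K * h - 1))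
    (hα' : α > 1 / (K * h))
    (hc2 : c < 1 - (θ + h * d) / (α * K * h * (θ - h * d)))
    (hxs : xs = d / (α * (1 - c) * (θ - h * d)))
    (hT : T = r * d * (α * h * K * (1 - c) - 1 - 2 * α * h * (1 - c) * xs) / (α * θ * K * (1 - c)))
    (hD : D = r * d * (α * K * (1 - c) * (θ - h * d) - d) / (K * α * θ * (1 - c))) :
    0 < T ∧ 0 < D :=
  interior_trace_det_low_complexity_general r K α h d θ c xs T D hr hK hα hh hd hθ0 hclt hθ1 hc2 hxs
    hT hD
end

section
/- Assume θ > θ1 and 0 < c < c1 (so that 0 < x* < K and y* > 0). Then for all real x > 0 and y > 0, the Lyapunov-derivative expression for the interior equilibrium satisfies (x - x*)·(r(1 - x/K) - α(1-c) y/(1 + α(1-c) h x)) + (θ/(θ - h d))·(y - y*)·(α(1-c) x/(1 + α(1-c) h x) - d/θ) ≤ (r/K)·(α h (1-c)(K - x*) - 1)·(x - x*)². In particular, if α h K (1-c)(θ - h d) ≤ θ, then the left-hand side is ≤ 0 for all x > 0, y > 0. -/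
set_option maxHeartbeats 1600000 in
/-- Lyapunov-derivative estimate for the interior equilibrium (x*, y*),
and nonpositivity of the Lyapunov derivative when αhK(1-c)(θ-hd) ≤ θ. -/
theorem lyapunov_estimate_interior
    (r K α h d θ c xs ys : ℝ)
    (hr : 0 < r) (hK : 0 < K) (hα : 0 < α) (hh : 0 < h) (hd : 0 < d)
    (hθ0 : 0 < θ) (hθlt : θ < 1) (hc0 : 0 < c) (hclt : c < 1)
    (hθ1 : θ > h * d + d / (α * K))
    (hc1 : c < 1 - d / (α * K * (θ - h * d)))
    (hxs : xs = d / (α * (1 - c) * (θ - h * d)))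
    (hys : ys = r * (K - xs) * (1 + α * h * (1 - c) * xs) / (α * K * (1 - c))) :
    (∀ x y : ℝ, 0 < x → 0 < y →
      (x - xs) * (r * (1 - x / K) - α * (1 - c) * y / (1 + α * (1 - c) * h * x)) +
        (θ / (θ - h * d)) * (y - ys) * (α * (1 - c) * x / (1 + α * (1 - c) * h * x) - d / θ) ≤
      (r / K) * (α * h * (1 - c) * (K - xs) - 1) * (x - xs) ^ 2) ∧
    (α * h * K * (1 - c) * (θ - h * d) ≤ θ →
      ∀ x y : ℝ, 0 < x → 0 < y →
        (x - xs) * (r * (1 - x / K) - α * (1 - c) * y / (1 + α * (1 - c) * h * x)) +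
          (θ / (θ - h * d)) * (y - ys) * (α * (1 - c) * x / (1 + α * (1 - c) * h * x) - d / θ)
          ≤ 0) := by
  have h1c : 0 < 1 - c := by linarith
  have hdαK : 0 < d / (α * K) := div_pos hd (by positivity)
  have hθhd : 0 < θ - h * d := by linarith
  have hKxs : xs < K := by
    have h2 : d / (α * K * (θ - h * d)) < 1 - c := by linarith
    rw [div_lt_iff₀ (by positivity)] at h2
    rw [hxs, div_lt_iff₀ (by positivity)]
    nlinarith
  have hxs0 : 0 < xs := by rw [hxs]; positivity
  have key : ∀ x y : ℝ, 0 < x →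
      (x - xs) * (r * (1 - x / K) - α * (1 - c) * y / (1 + α * (1 - c) * h * x)) +
        (θ / (θ - h * d)) * (y - ys) * (α * (1 - c) * x / (1 + α * (1 - c) * h * x) - d / θ)
      = (r / K) * (α * h * (1 - c) * (K - xs) / (1 + α * (1 - c) * h * x) - 1) * (x - xs) ^ 2 := by
    intro x y hx
    have hD : (0:ℝ) < 1 + α * (1 - c) * h * x := by positivity
    subst hxs
    subst hys
    have hne1 : θ - h * d ≠ 0 := hθhd.ne'
    have hne2 : (1:ℝ) - c ≠ 0 := h1c.ne'
    have hne3 : 1 + α * (1 - c) * h * x ≠ 0 := hD.ne'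
    have hne4 : K ≠ 0 := hK.ne'
    have hne5 : α ≠ 0 := hα.ne'
    have hne6 : θ ≠ 0 := hθ0.ne'
    have hne7 : θ - d * h ≠ 0 := by rw [mul_comm]; exact hne1
    have hne8 : 1 + x * α * (1 - c) * h ≠ 0 := by rw [show x * α * (1 - c) * h = α * (1 - c) * h * x by ring]; exact hne3
    field_simp
    ring
  constructor
  · intro x y hx hy
    rw [key x y hx]
    have hpos : 0 < α * (1 - c) * h * x := by positivity
    have hD : (1:ℝ) ≤ 1 + α * (1 - c) * h * x := by linarith
    have hnum : (0:ℝ) ≤ α * h * (1 - c) * (K - xs) := by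
      have : 0 < K - xs := by linarith
      positivity
    have hb : α * h * (1 - c) * (K - xs) / (1 + α * (1 - c) * h * x)
        ≤ α * h * (1 - c) * (K - xs) := div_le_self hnum hD
    have hrK : 0 < r / K := div_pos hr hK
    have h3 := mul_le_mul_of_nonneg_left
      (mul_le_mul_of_nonneg_right hb (sq_nonneg (x - xs))) hrK.le
    linarith [h3]
  · intro hcond x y hx hy
    rw [key x y hx]
    have hpos : 0 < α * (1 - c) * h * x := by positivity
    have hD : (1:ℝ) ≤ 1 + α * (1 - c) * h * x := by linarith
    have hD0 : (0:ℝ) < 1 + α * (1 - c) * h * x := by positivity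
    have hden : α * (1 - c) * (θ - h * d) ≠ 0 := by positivity
    have e : α * (1 - c) * (θ - h * d) * xs = d := by
      rw [hxs, mul_div_cancel₀ _ hden]
    have e2 : h * (α * (1 - c) * (θ - h * d) * xs) = h * d := by rw [e]
    have h2 : α * h * (1 - c) * (K - xs) * (θ - h * d) ≤ θ - h * d := by
      linarith [e2, hcond]
    have h1 : α * h * (1 - c) * (K - xs) ≤ 1 := by
      nlinarith [h2, hθhd]
    have hb : α * h * (1 - c) * (K - xs) / (1 + α * (1 - c) * h * x) ≤ 1 := by
      rw [div_le_one hD0]; linarith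
    have hrK : 0 < r / K := div_pos hr hK
    have h3 := mul_le_mul_of_nonneg_left
      (mul_le_mul_of_nonneg_right hb (sq_nonneg (x - xs))) hrK.le
    linarith [h3]
end

section
/- Let s > 0, m ∈ (0,1], S = s^m/(m Γ(m)), and s₁ = (2 m Γ(m)/d)^{1/m}. The eigenvalues of the Jacobian of the discretized map F at the fixed point (0,0) are ξ₁ = 1 + r S and ξ₂ = 1 - d S, and: ξ₁ > 1 for every s > 0; |ξ₂| < 1 if and only if 0 < s < s₁; |ξ₂| > 1 if and only if s > s₁; and ξ₂ = -1 if and only if s = s₁. -/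
/-! The Jacobian of `F` at the origin is diagonal, `diag (1 + r S, 1 - d S)`, so everything reduces
to comparing `d S` with `2`: for `x > 0` one has `|1 - x| < 1 ↔ x < 2`, `|1 - x| > 1 ↔ x > 2` and
`1 - x = -1 ↔ x = 2`. Since `d S = (d / (m Γ(m))) s ^ m` is strictly increasing in `s`, it crosses
the value `2` exactly at `s = s₁`. -/

namespace Real

variable {a b s m : ℝ}

lemma mul_rpow_lt_iff_lt_rpow_one_div (ha : 0 < a) (hb : 0 ≤ b) (hs : 0 ≤ s) (hm : 0 < m) :
    a * s ^ m < b ↔ s < (b / a) ^ (1 / m) := by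
  rw [one_div, lt_rpow_inv_iff_of_pos hs (div_nonneg hb ha.le) hm, lt_div_iff₀' ha]

lemma lt_mul_rpow_iff_rpow_one_div_lt (ha : 0 < a) (hb : 0 ≤ b) (hs : 0 ≤ s) (hm : 0 < m) :
    b < a * s ^ m ↔ (b / a) ^ (1 / m) < s := by
  rw [one_div, rpow_inv_lt_iff_of_pos (div_nonneg hb ha.le) hs hm, div_lt_iff₀' ha]

lemma mul_rpow_eq_iff_eq_rpow_one_div (ha : 0 < a) (hb : 0 ≤ b) (hs : 0 ≤ s) (hm : 0 < m) :
    a * s ^ m = b ↔ s = (b / a) ^ (1 / m) := by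
  rw [one_div, eq_rpow_inv hs (div_nonneg hb ha.le) hm.ne', eq_div_iff_mul_eq ha.ne', mul_comm]

end Real

variable {x : ℝ}

lemma abs_one_sub_lt_one_iff (hx : 0 < x) : |1 - x| < 1 ↔ x < 2 := by
  rw [abs_lt]
  constructor
  · rintro ⟨h, -⟩
    linarith
  · intro h
    constructor <;> linarith

lemma one_lt_abs_one_sub_iff (hx : 0 < x) : 1 < |1 - x| ↔ 2 < x := by
  rw [abs_sub_comm, lt_abs]
  constructor
  · rintro (h | h) <;> linarith
  · intro h
    left
    linarith

lemma one_sub_eq_neg_one_iff : 1 - x = -1 ↔ x = 2 := by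
  constructor <;> intro h <;> linarith

theorem discretized_origin_eigenvalues_general
    (r d s m S s₁ ξ₁ ξ₂ : ℝ)
    (hr : 0 < r) (hd : 0 < d)
    (hs : 0 < s) (hm0 : 0 < m)
    (hS : S = s ^ m / (m * Real.Gamma m))
    (hs₁ : s₁ = (2 * m * Real.Gamma m / d) ^ (1 / m))
    (hξ1 : ξ₁ = 1 + r * S) (hξ2 : ξ₂ = 1 - d * S) :
    ξ₁ > 1 ∧ (|ξ₂| < 1 ↔ s < s₁) ∧ (|ξ₂| > 1 ↔ s > s₁) ∧ (ξ₂ = -1 ↔ s = s₁) := by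
  have hmΓ : 0 < m * Real.Gamma m := mul_pos hm0 (Real.Gamma_pos_of_pos hm0)
  have hS_pos : 0 < S := by rw [hS]; positivity
  have ha : 0 < d / (m * Real.Gamma m) := div_pos hd hmΓ
  have hdS : d * S = d / (m * Real.Gamma m) * s ^ m := by rw [hS]; ring
  have hs₁' : s₁ = (2 / (d / (m * Real.Gamma m))) ^ (1 / m) := by
    rw [hs₁]; congr 1; field_simp
  have hdS_pos : 0 < d * S := mul_pos hd hS_pos
  refine ⟨hξ1 ▸ lt_add_of_pos_right 1 (mul_pos hr hS_pos), ?_, ?_, ?_⟩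
  · rw [hξ2, abs_one_sub_lt_one_iff hdS_pos, hdS, hs₁',
      Real.mul_rpow_lt_iff_lt_rpow_one_div ha zero_le_two hs.le hm0]
  · rw [hξ2, gt_iff_lt, one_lt_abs_one_sub_iff hdS_pos, hdS, hs₁', gt_iff_lt,
      Real.lt_mul_rpow_iff_rpow_one_div_lt ha zero_le_two hs.le hm0]
  · rw [hξ2, one_sub_eq_neg_one_iff, hdS, hs₁',
      ← Real.mul_rpow_eq_iff_eq_rpow_one_div ha zero_le_two hs.le hm0]

/-- Eigenvalues of the Jacobian of the discretized map F at (0,0) are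
ξ₁ = 1 + rS > 1 and ξ₂ = 1 - dS; |ξ₂| < 1 iff s < s₁, |ξ₂| > 1 iff s > s₁,
and ξ₂ = -1 iff s = s₁, where s₁ = (2mΓ(m)/d)^{1/m}. -/
theorem discretized_origin_eigenvalues
    (r K α h d θ c s m S s₁ ξ₁ ξ₂ : ℝ)
    (hr : 0 < r) (hK : 0 < K) (hα : 0 < α) (hh : 0 < h) (hd : 0 < d)
    (hθ0 : 0 < θ) (hθlt : θ < 1) (hc0 : 0 < c) (hclt : c < 1)
    (hs : 0 < s) (hm0 : 0 < m) (hm1 : m ≤ 1)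
    (hS : S = s ^ m / (m * Real.Gamma m))
    (hs₁ : s₁ = (2 * m * Real.Gamma m / d) ^ (1 / m))
    (hξ1 : ξ₁ = 1 + r * S) (hξ2 : ξ₂ = 1 - d * S) :
    ξ₁ > 1 ∧ (|ξ₂| < 1 ↔ s < s₁) ∧ (|ξ₂| > 1 ↔ s > s₁) ∧ (ξ₂ = -1 ↔ s = s₁) :=
  discretized_origin_eigenvalues_general r d s m S s₁ ξ₁ ξ₂ hr hd hs hm0 hS hs₁ hξ1 hξ2
end

section
/- Let s > 0, m ∈ (0,1], S = s^m/(m Γ(m)), s₂ = (2 m Γ(m)/r)^{1/m}, and s₃ = (2 m Γ(m)(1 + α K h (1-c))/(d - K α (1-c)(θ - h d)))^{1/m}. The eigenvalues of the Jacobian of the discretized map F at the fixed point (K,0) are ξ₁ = 1 - r S and ξ₂ = 1 + S (θ α K (1-c)/(1 + α K (1-c) h) - d). If θ > θ1, c > c1, and 0 < s < min(s₂, s₃), then |ξ₁| < 1 and |ξ₂| < 1. -/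
/-- If θ > θ₁, c > c₁ and 0 < s < min(s₂, s₃), then the eigenvalues
ξ₁ = 1 - rS and ξ₂ = 1 + S(θαK(1-c)/(1+αK(1-c)h) - d) of the Jacobian of the
discretized map at (K,0) both have modulus less than 1. -/
theorem discretized_predator_free_stable
    (r K α h d θ c s m S s₂ s₃ ξ₁ ξ₂ : ℝ)
    (hr : 0 < r) (hK : 0 < K) (hα : 0 < α) (hh : 0 < h) (hd : 0 < d)
    (hθ0 : 0 < θ) (hθlt : θ < 1) (hc0 : 0 < c) (hclt : c < 1)
    (hs : 0 < s) (hm0 : 0 < m) (hm1 : m ≤ 1)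
    (hS : S = s ^ m / (m * Real.Gamma m))
    (hs₂ : s₂ = (2 * m * Real.Gamma m / r) ^ (1 / m))
    (hs₃ : s₃ = (2 * m * Real.Gamma m * (1 + α * K * h * (1 - c)) /
                  (d - K * α * (1 - c) * (θ - h * d))) ^ (1 / m))
    (hξ1 : ξ₁ = 1 - r * S)
    (hξ2 : ξ₂ = 1 + S * (θ * α * K * (1 - c) / (1 + α * K * (1 - c) * h) - d))
    (hθ1 : θ > h * d + d / (α * K))
    (hc1 : c > 1 - d / (α * K * (θ - h * d)))
    (hsmin : s < min s₂ s₃) :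
    |ξ₁| < 1 ∧ |ξ₂| < 1 := by
  have hG : 0 < Real.Gamma m := Real.Gamma_pos_of_pos hm0
  have hmG : 0 < m * Real.Gamma m := mul_pos hm0 hG
  have hsm : 0 < s ^ m := Real.rpow_pos_of_pos hs m
  have hSpos : 0 < S := by rw [hS]; positivity
  have hc' : 0 < 1 - c := by linarith
  have hden : 0 < 1 + α * K * (1 - c) * h := by nlinarith [mul_pos (mul_pos (mul_pos hα hK) hc') hh]
  have hθhd : 0 < θ - h * d := by
    have : 0 < d / (α * K) := by positivity
    linarith
  have hD : 0 < d - K * α * (1 - c) * (θ - h * d) := by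
    have h2 : 0 < α * K * (θ - h * d) := by positivity
    have h1 : 1 - c < d / (α * K * (θ - h * d)) := by linarith
    have := (lt_div_iff₀ h2).mp h1
    nlinarith
  have hs2 : s < s₂ := lt_of_lt_of_le hsmin (min_le_left _ _)
  have hs3 : s < s₃ := lt_of_lt_of_le hsmin (min_le_right _ _)
  have key : ∀ x : ℝ, 0 ≤ x → s < x ^ (1 / m) → s ^ m < x := by
    intro x hx hlt
    have h1 : s ^ m < (x ^ (1 / m)) ^ m :=
      Real.rpow_lt_rpow (le_of_lt hs) hlt hm0
    rwa [← Real.rpow_mul hx, one_div_mul_cancel hm0.ne', Real.rpow_one] at h1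
  have k2 : s ^ m < 2 * m * Real.Gamma m / r := key _ (by positivity) (hs₂ ▸ hs2)
  have k3 : s ^ m < 2 * m * Real.Gamma m * (1 + α * K * h * (1 - c)) /
      (d - K * α * (1 - c) * (θ - h * d)) := key _ (by positivity) (hs₃ ▸ hs3)
  have k2' : s ^ m * r < 2 * m * Real.Gamma m := (lt_div_iff₀ hr).mp k2
  have k3' : s ^ m * (d - K * α * (1 - c) * (θ - h * d)) <
      2 * m * Real.Gamma m * (1 + α * K * h * (1 - c)) := (lt_div_iff₀ hD).mp k3
  constructor
  · have hrS : r * S < 2 := by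
      rw [hS, mul_div_assoc', div_lt_iff₀ hmG]
      nlinarith [k2']
    have h0 : 0 < r * S := mul_pos hr hSpos
    rw [hξ1, abs_lt]
    constructor <;> linarith
  · have hE : θ * α * K * (1 - c) / (1 + α * K * (1 - c) * h) - d =
        -((d - K * α * (1 - c) * (θ - h * d)) / (1 + α * K * (1 - c) * h)) := by
      field_simp
      ring
    have hpos : 0 < S * ((d - K * α * (1 - c) * (θ - h * d)) / (1 + α * K * (1 - c) * h)) := by
      positivity
    have hlt2 : S * ((d - K * α * (1 - c) * (θ - h * d)) / (1 + α * K * (1 - c) * h)) < 2 := by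
      rw [hS, div_mul_div_comm, div_lt_iff₀ (by positivity)]
      calc s ^ m * (d - K * α * (1 - c) * (θ - h * d))
          < 2 * m * Real.Gamma m * (1 + α * K * h * (1 - c)) := k3'
        _ = 2 * (m * Real.Gamma m * (1 + α * K * (1 - c) * h)) := by ring
    rw [hξ2, hE, abs_lt]
    constructor <;> linarith
end

section
/- Let s > 0, m ∈ (0,1], S = s^m/(m Γ(m)), s₂ = (2 m Γ(m)/r)^{1/m}, and s₃ = (2 m Γ(m)(1 + α K h (1-c))/(d - K α (1-c)(θ - h d)))^{1/m}. If θ > θ1, c > c1, and s > max(s₂, s₃), then the eigenvalues ξ₁ = 1 - r S and ξ₂ = 1 + S (θ α K (1-c)/(1 + α K (1-c) h) - d) of the Jacobian of the discretized map F at (K,0) satisfy |ξ₁| > 1 and |ξ₂| > 1 (so (K,0) is a source). -/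
/-- If θ > θ₁, c > c₁ and s > max(s₂, s₃), then the eigenvalues
ξ₁ = 1 - rS and ξ₂ = 1 + S(θαK(1-c)/(1+αK(1-c)h) - d) of the Jacobian of the
discretized map at (K,0) both have modulus greater than 1, so (K,0) is a source. -/
theorem discretized_predator_free_source
    (r K α h d θ c s m S s₂ s₃ ξ₁ ξ₂ : ℝ)
    (hr : 0 < r) (hK : 0 < K) (hα : 0 < α) (hh : 0 < h) (hd : 0 < d)
    (hθ0 : 0 < θ) (hθlt : θ < 1) (hc0 : 0 < c) (hclt : c < 1)
    (hs : 0 < s) (hm0 : 0 < m) (hm1 : m ≤ 1)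
    (hS : S = s ^ m / (m * Real.Gamma m))
    (hs₂ : s₂ = (2 * m * Real.Gamma m / r) ^ (1 / m))
    (hs₃ : s₃ = (2 * m * Real.Gamma m * (1 + α * K * h * (1 - c)) /
                  (d - K * α * (1 - c) * (θ - h * d))) ^ (1 / m))
    (hξ1 : ξ₁ = 1 - r * S)
    (hξ2 : ξ₂ = 1 + S * (θ * α * K * (1 - c) / (1 + α * K * (1 - c) * h) - d))
    (hθ1 : θ > h * d + d / (α * K))
    (hc1 : c > 1 - d / (α * K * (θ - h * d)))
    (hsmax : s > max s₂ s₃) :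
    |ξ₁| > 1 ∧ |ξ₂| > 1 := by
  have hG : 0 < Real.Gamma m := Real.Gamma_pos_of_pos hm0
  have hmG : 0 < m * Real.Gamma m := by positivity
  -- θ - h*d > 0
  have hdαK : 0 < d / (α * K) := by positivity
  have hθhd : 0 < θ - h * d := by linarith
  -- E > 0
  have hP : 0 < α * K * (θ - h * d) := by positivity
  have h1c : 0 < 1 - c := by linarith
  have hcc : 1 - c < d / (α * K * (θ - h * d)) := by linarith
  have hE : 0 < d - K * α * (1 - c) * (θ - h * d) := by
    have := (lt_div_iff₀ hP).mp hcc
    nlinarith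
  set E := d - K * α * (1 - c) * (θ - h * d) with hEdef
  clear_value E
  have hD : 0 < 1 + α * K * (1 - c) * h := by positivity
  set D := 1 + α * K * (1 - c) * h with hDdef
  clear_value D
  -- key: if s > a^(1/m) and 0 < a then a < s^m
  have key : ∀ a : ℝ, 0 < a → a ^ (1 / m) < s → a < s ^ m := by
    intro a ha hlt
    have h1 : (a ^ (1 / m)) ^ m < s ^ m :=
      Real.rpow_lt_rpow (Real.rpow_nonneg ha.le _) hlt hm0
    rwa [← Real.rpow_mul ha.le, one_div, inv_mul_cancel₀ hm0.ne', Real.rpow_one] at h1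
  have hsgt2 : s₂ < s := lt_of_le_of_lt (le_max_left _ _) hsmax
  have hsgt3 : s₃ < s := lt_of_le_of_lt (le_max_right _ _) hsmax
  -- ξ₁
  have h2 : 2 * m * Real.Gamma m / r < s ^ m := by
    apply key _ (by positivity)
    rwa [← hs₂]
  have hrS : 2 < r * S := by
    rw [hS, mul_div_assoc']
    rw [lt_div_iff₀ hmG]
    have := (div_lt_iff₀ hr).mp h2
    nlinarith
  have hξ1lt : ξ₁ < -1 := by rw [hξ1]; linarith
  constructor
  · exact lt_of_lt_of_le (by linarith) (neg_le_abs ξ₁)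
  -- ξ₂
  · have hDD : (1 + α * K * h * (1 - c)) = D := by rw [hDdef]; ring
    have h3 : 2 * m * Real.Gamma m * (1 + α * K * h * (1 - c)) / E < s ^ m :=
      key _ (by positivity) (by rw [← hs₃]; exact hsgt3)
    rw [hDD] at h3
    have hval : θ * α * K * (1 - c) / D - d = -(E / D) := by
      rw [hEdef, hDdef]
      field_simp
      ring
    have hSE : 2 < S * (E / D) := by
      rw [hS, div_mul_div_comm, lt_div_iff₀ (by positivity : (0:ℝ) < m * Real.Gamma m * D)]
      have := (div_lt_iff₀ hE).mp h3
      linarith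
    have hξ2lt : ξ₂ < -1 := by
      rw [hξ2, hval]
      linarith
    exact lt_of_lt_of_le (by linarith) (neg_le_abs ξ₂)
end

section
/- Assume θ > θ1 and 0 < c < c1, and let s > 0, m ∈ (0,1], S = s^m/(m Γ(m)). Then the matrix of partial derivatives of the discretized map F at the fixed point (x*, y*) equals [[1 - S G, -S α(1-c)(θ - h d) x*/θ], [S r (θ - h d)(K - x*)/K, 1]]; in particular, its trace equals 2 - S G and its determinant equals 1 - S G + S² H. -/
set_option maxHeartbeats 4000000 in
/-- The matrix of partial derivatives of the discretized map F at the
interior fixed point (x*, y*) equals [[1 - SG, -Sα(1-c)(θ-hd)x*/θ], [Sr(θ-hd)(K-x*)/K, 1]];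
in particular its trace is 2 - SG and its determinant is 1 - SG + S²H. -/
theorem discretized_interior_jacobian
    (r K α h d θ c s m S xs ys G H : ℝ)
    (hr : 0 < r) (hK : 0 < K) (hα : 0 < α) (hh : 0 < h) (hd : 0 < d)
    (hθ0 : 0 < θ) (hθlt : θ < 1) (hc0 : 0 < c) (hclt : c < 1)
    (hθ1 : θ > h * d + d / (α * K))
    (hc1 : c < 1 - d / (α * K * (θ - h * d)))
    (hs : 0 < s) (hm0 : 0 < m) (hm1 : m ≤ 1)
    (hS : S = s ^ m / (m * Real.Gamma m))
    (hxs : xs = d / (α * (1 - c) * (θ - h * d)))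
    (hys : ys = r * (K - xs) * (1 + α * h * (1 - c) * xs) / (α * K * (1 - c)))
    (hG : G = (r * xs / (K * θ)) * (θ + h * d - α * h * K * (1 - c) * (θ - h * d)))
    (hH : H = (r * xs * (θ - h * d) / (K * θ)) * (α * K * (1 - c) * (θ - h * d) - d))
    (F : ℝ × ℝ → ℝ × ℝ)
    (hF : F = fun p =>
      (p.1 + S * p.1 * (r * (1 - p.1 / K) - α * (1 - c) * p.2 / (1 + α * (1 - c) * h * p.1)),
       p.2 + S * p.2 * (θ * α * (1 - c) * p.1 / (1 + α * (1 - c) * h * p.1) - d))) :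
    HasDerivAt (fun x => (F (x, ys)).1) (1 - S * G) xs ∧
    HasDerivAt (fun y => (F (xs, y)).1) (-(S * α * (1 - c) * (θ - h * d) * xs / θ)) ys ∧
    HasDerivAt (fun x => (F (x, ys)).2) (S * r * (θ - h * d) * (K - xs) / K) xs ∧
    HasDerivAt (fun y => (F (xs, y)).2) (1 : ℝ) ys ∧
    (1 - S * G) + 1 = 2 - S * G ∧
    (1 - S * G) * 1 -
      (-(S * α * (1 - c) * (θ - h * d) * xs / θ)) * (S * r * (θ - h * d) * (K - xs) / K) =
      1 - S * G + S ^ 2 * H := by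
  subst hF
  have hc' : (0:ℝ) < 1 - c := by linarith
  have hdak : 0 < d / (α * K) := div_pos hd (mul_pos hα hK)
  have hθhd : 0 < θ - h * d := by linarith
  have hxp : 0 < xs := by
    rw [hxs]; exact div_pos hd (mul_pos (mul_pos hα hc') hθhd)
  have hDpos : 0 < 1 + α * (1 - c) * h * xs := by
    have := mul_pos (mul_pos (mul_pos hα hc') hh) hxp
    linarith
  have hDne : (1 + α * (1 - c) * h * xs) ≠ 0 := hDpos.ne'
  have hAxs : α * (1 - c) * (θ - h * d) * xs = d := by
    rw [hxs]; field_simp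
  have hD : 1 + α * (1 - c) * h * xs = θ / (θ - h * d) := by
    rw [hxs]; field_simp; ring
  have hys' : ys = r * (K - xs) * (θ / (θ - h * d)) / (α * K * (1 - c)) := by
    rw [hys, show 1 + α * h * (1 - c) * xs = 1 + α * (1 - c) * h * xs by ring, hD]
  have hden : HasDerivAt (fun x : ℝ => 1 + α * (1 - c) * h * x) (α * (1 - c) * h) xs := by
    simpa using ((hasDerivAt_id xs).const_mul (α * (1 - c) * h)).const_add 1
  refine ⟨?_, ?_, ?_, ?_, by ring, ?_⟩
  · -- ∂F₁/∂x
    have hlin : HasDerivAt (fun x : ℝ => r * (1 - x / K)) (r * -(1 / K)) xs := by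
      simpa using (((hasDerivAt_id xs).div_const K).const_sub 1).const_mul r
    have hfrac : HasDerivAt (fun x : ℝ => α * (1 - c) * ys / (1 + α * (1 - c) * h * x))
        ((0 * (1 + α * (1 - c) * h * xs) - α * (1 - c) * ys * (α * (1 - c) * h)) /
          (1 + α * (1 - c) * h * xs) ^ 2) xs :=
      (hasDerivAt_const xs (α * (1 - c) * ys)).div hden hDne
    have hinner := hlin.sub hfrac
    have hSx : HasDerivAt (fun x : ℝ => S * x) (S * 1) xs := (hasDerivAt_id xs).const_mul S
    have htot := (hasDerivAt_id xs).add (hSx.mul hinner)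
    refine htot.congr_deriv (Eq.symm ?_)
    subst hG; subst hys; subst hxs
    simp only [Pi.sub_apply, hD, show 1 + α * h * (1 - c) * (d / (α * (1 - c) * (θ - h * d))) = θ / (θ - h * d) by linear_combination hD]
    set t := θ - h * d with ht
    have ht0 : t ≠ 0 := hθhd.ne'
    field_simp [hc'.ne', ht0, hK.ne', hθ0.ne', hα.ne']
    rw [ht]; ring
  · -- ∂F₁/∂y
    have h1 : HasDerivAt (fun y : ℝ => α * (1 - c) * y / (1 + α * (1 - c) * h * xs))
        (α * (1 - c) * 1 / (1 + α * (1 - c) * h * xs)) ys :=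
      ((hasDerivAt_id ys).const_mul (α * (1 - c))).div_const _
    have htot := ((h1.const_sub (r * (1 - xs / K))).const_mul (S * xs)).const_add xs
    refine htot.congr_deriv (Eq.symm ?_)
    subst hxs
    field_simp
    ring
  · -- ∂F₂/∂x
    have hnum : HasDerivAt (fun x : ℝ => θ * α * (1 - c) * x) (θ * α * (1 - c) * 1) xs :=
      (hasDerivAt_id xs).const_mul _
    have hq := hnum.div hden hDne
    have htot := ((hq.sub_const d).const_mul (S * ys)).const_add ys
    refine htot.congr_deriv (Eq.symm ?_)
    subst hys; subst hxs
    field_simp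
    ring
  · -- ∂F₂/∂y
    have hSy : HasDerivAt (fun y : ℝ => S * y) (S * 1) ys := (hasDerivAt_id ys).const_mul S
    have htot := (hasDerivAt_id ys).add
      (hSy.mul_const (θ * α * (1 - c) * xs / (1 + α * (1 - c) * h * xs) - d))
    refine htot.congr_deriv (Eq.symm ?_)
    have hfix : θ * α * (1 - c) * xs / (1 + α * (1 - c) * h * xs) - d = 0 := by
      rw [sub_eq_zero, div_eq_iff hDne, hD, mul_div_assoc', eq_div_iff hθhd.ne']; linear_combination θ * hAxs
    rw [hfix]; ring
  · -- determinant
    have e : α * K * (1 - c) * (θ - h * d) - d = α * (1 - c) * (θ - h * d) * (K - xs) := by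
      linear_combination hAxs
    rw [hH, e]
    field_simp
    ring
end

section
/- If θ > θ1, θ > θ2, α > 1/(K h), and c2 < c < c1, then G > 0 and H > 0. -/
/-! Both signs are the threshold conditions on `c` in disguise: once `θ > h d` makes the
denominators positive, `c > c₂` clears to `α h K (1 - c) (θ - h d) < θ + h d`, the second
factor of `G`, and `c < c₁` clears to `d < α K (1 - c) (θ - h d)`, the second factor of `H`.
The prefactors are positive because `x* > 0`. -/

section ThresholdClearing

variable {𝕜 : Type*} [Field 𝕜] [LinearOrder 𝕜] [IsStrictOrderedRing 𝕜] {a b c : 𝕜}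

theorem one_sub_mul_lt_of_one_sub_div_lt (hb : 0 < b) (h : 1 - a / b < c) :
    (1 - c) * b < a := by
  rw [← lt_div_iff₀ hb]
  linarith

theorem lt_one_sub_mul_of_lt_one_sub_div_s15 (hb : 0 < b) (h : c < 1 - a / b) :
    a < (1 - c) * b := by
  rw [← div_lt_iff₀ hb]
  linarith

end ThresholdClearing

theorem G_H_positive_general
    (r K α h d θ c xs G H : ℝ)
    (hr : 0 < r) (hK : 0 < K) (hα : 0 < α) (hh : 0 < h) (hd : 0 < d)
    (hθ0 : 0 < θ) (hclt : c < 1)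
    (hθ1 : θ > h * d + d / (α * K))
    (hc2 : c > 1 - (θ + h * d) / (α * K * h * (θ - h * d)))
    (hc1 : c < 1 - d / (α * K * (θ - h * d)))
    (hxs : xs = d / (α * (1 - c) * (θ - h * d)))
    (hG : G = (r * xs / (K * θ)) * (θ + h * d - α * h * K * (1 - c) * (θ - h * d)))
    (hH : H = (r * xs * (θ - h * d) / (K * θ)) * (α * K * (1 - c) * (θ - h * d) - d)) :
    0 < G ∧ 0 < H := by
  have hgap : 0 < θ - h * d := by
    have : 0 < d / (α * K) := by positivity
    linarith
  have hxs0 : 0 < xs := hxs ▸ div_pos hd (mul_pos (mul_pos hα (sub_pos.2 hclt)) hgap)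
  have hKθ : 0 < K * θ := mul_pos hK hθ0
  have hGfac := one_sub_mul_lt_of_one_sub_div_lt (by positivity) hc2
  have hHfac := lt_one_sub_mul_of_lt_one_sub_div_s15 (by positivity) hc1
  subst hG hH
  constructor
  · exact mul_pos (div_pos (mul_pos hr hxs0) hKθ) (by linear_combination hGfac)
  · exact mul_pos (div_pos (mul_pos (mul_pos hr hxs0) hgap) hKθ) (by linear_combination hHfac)

/-- If θ > θ₁, θ > θ₂, α > 1/(Kh) and c₂ < c < c₁, then G > 0 and H > 0. -/
theorem G_H_positive
    (r K α h d θ c xs G H : ℝ)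
    (hr : 0 < r) (hK : 0 < K) (hα : 0 < α) (hh : 0 < h) (hd : 0 < d)
    (hθ0 : 0 < θ) (hθlt : θ < 1) (hc0 : 0 < c) (hclt : c < 1)
    (hθ1 : θ > h * d + d / (α * K))
    (hθ2 : θ > h * d * (α * K * h + 1) / (α * K * h - 1))
    (hα' : α > 1 / (K * h))
    (hc2 : c > 1 - (θ + h * d) / (α * K * h * (θ - h * d)))
    (hc1 : c < 1 - d / (α * K * (θ - h * d)))
    (hxs : xs = d / (α * (1 - c) * (θ - h * d)))
    (hG : G = (r * xs / (K * θ)) * (θ + h * d - α * h * K * (1 - c) * (θ - h * d)))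
    (hH : H = (r * xs * (θ - h * d) / (K * θ)) * (α * K * (1 - c) * (θ - h * d) - d)) :
    0 < G ∧ 0 < H :=
  G_H_positive_general r K α h d θ c xs G H hr hK hα hh hd hθ0 hclt hθ1 hc2 hc1 hxs hG hH
end

section
/- Assume θ > θ1, θ > θ2, α > 1/(K h), and c2 < c < c1 (so G > 0 and H > 0). Let s > 0, m ∈ (0,1], S = s^m/(m Γ(m)), s₄ = (m Γ(m) G/H)^{1/m}, and s₅ = (2 m Γ(m)/G)^{1/m}. If 0 < s < min(s₄, s₅), then 1 - (1 - S G + S² H) > 0, 1 - (2 - S G) + (1 - S G + S² H) > 0, and 1 + (2 - S G) + (1 - S G + S² H) > 0; consequently every complex root λ of λ² - (2 - S G) λ + (1 - S G + S² H) = 0 satisfies |λ| < 1. -/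
/-!
The hypotheses `c₂ < c < c₁` say exactly that the second factors of `G` and `H` are positive, so
`G, H > 0`. Since `S` is increasing in `s`, the bound `s < s₄` becomes `S H < G` and `s < s₅`
becomes `S G < 2`; with `T = 2 - S G` and `D = 1 - S G + S² H` these give `D < 1`,
`1 - T + D = S² H > 0` and `1 + T + D = 4 - 2 S G + S² H > 0`. These are the Jury conditions for
`λ² - T λ + D`: a non-real root has `|λ|² = D < 1`, and a real root lies in `(-1, 1)` because the
polynomial is positive at `±1` and the product of its roots is `D < 1`.
-/

lemma sq_lt_one_of_quadratic_eq_zero {T D x : ℝ} (hD : D < 1) (hp1 : 0 < 1 - T + D)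
    (hpm1 : 0 < 1 + T + D) (hx : x ^ 2 - T * x + D = 0) : x ^ 2 < 1 := by
  have hx_lt : x < 1 := by nlinarith
  have hx_gt : -1 < x := by nlinarith
  nlinarith

lemma norm_lt_one_of_quadratic_eq_zero {T D : ℝ} (hD : D < 1) (hp1 : 0 < 1 - T + D)
    (hpm1 : 0 < 1 + T + D) {z : ℂ} (hz : z ^ 2 - (T : ℂ) * z + (D : ℂ) = 0) : ‖z‖ < 1 := by
  have hre : z.re ^ 2 - z.im ^ 2 - T * z.re + D = 0 := by
    simpa [pow_two, Complex.mul_re] using congrArg Complex.re hz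
  have him : z.im * (2 * z.re - T) = 0 := by
    have h : z.re * z.im + z.im * z.re - T * z.im = 0 := by
      simpa [pow_two, Complex.mul_im] using congrArg Complex.im hz
    linear_combination h
  have hnormSq : z.re ^ 2 + z.im ^ 2 < 1 := by
    rcases mul_eq_zero.mp him with h_real | h_centre
    · rw [h_real] at hre ⊢
      have := sq_lt_one_of_quadratic_eq_zero (x := z.re) hD hp1 hpm1 (by linear_combination hre)
      linarith
    · -- a non-real root has real part `T / 2`, and then `|z|² = D`
      nlinarith
  rw [← sq_lt_one_iff₀ (norm_nonneg z), Complex.sq_norm, Complex.normSq_apply]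
  nlinarith

lemma jury_conditions_of_mul_lt {S G H : ℝ} (hS : 0 < S) (hH : 0 < H) (hSH : S * H < G)
    (hSG : S * G < 2) :
    1 - (1 - S * G + S ^ 2 * H) > 0 ∧
    1 - (2 - S * G) + (1 - S * G + S ^ 2 * H) > 0 ∧
    1 + (2 - S * G) + (1 - S * G + S ^ 2 * H) > 0 := by
  have hS2H : 0 < S ^ 2 * H := by positivity
  refine ⟨?_, by linarith, by linarith⟩
  have : 0 < S * (G - S * H) := mul_pos hS (by linarith)
  linear_combination this

lemma sub_pos_of_one_sub_div_lt {a b c : ℝ} (hb : 0 < b) (h : 1 - a / b < c) :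
    0 < a - (1 - c) * b := by
  have := (lt_div_iff₀ hb).mp (by linarith : 1 - c < a / b)
  linarith

lemma sub_pos_of_lt_one_sub_div {a b c : ℝ} (hb : 0 < b) (h : c < 1 - a / b) :
    0 < (1 - c) * b - a := by
  have := (div_lt_iff₀ hb).mp (by linarith : a / b < 1 - c)
  linarith

lemma rpow_div_mul_lt_of_lt_rpow_one_div {s m A B : ℝ} (hs : 0 < s) (hm : 0 < m) (hA : 0 < A)
    (hB : 0 < B) (h : s < (m * Real.Gamma m * A / B) ^ (1 / m)) :
    s ^ m / (m * Real.Gamma m) * B < A := by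
  have hP : 0 < m * Real.Gamma m := mul_pos hm (Real.Gamma_pos_of_pos hm)
  rw [one_div, Real.lt_rpow_inv_iff_of_pos hs.le (by positivity) hm, lt_div_iff₀ hB] at h
  rw [div_mul_eq_mul_div, div_lt_iff₀ hP]
  linarith

theorem discretized_interior_stable_general
    (r K α h d θ c s m S s₄ s₅ xs G H : ℝ)
    (hr : 0 < r) (hK : 0 < K) (hα : 0 < α) (hh : 0 < h) (hd : 0 < d)
    (hθ0 : 0 < θ) (hclt : c < 1)
    (hθ1 : θ > h * d + d / (α * K))
    (hc2 : c > 1 - (θ + h * d) / (α * K * h * (θ - h * d)))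
    (hc1 : c < 1 - d / (α * K * (θ - h * d)))
    (hs : 0 < s) (hm0 : 0 < m)
    (hS : S = s ^ m / (m * Real.Gamma m))
    (hxs : xs = d / (α * (1 - c) * (θ - h * d)))
    (hG : G = (r * xs / (K * θ)) * (θ + h * d - α * h * K * (1 - c) * (θ - h * d)))
    (hH : H = (r * xs * (θ - h * d) / (K * θ)) * (α * K * (1 - c) * (θ - h * d) - d))
    (hs₄ : s₄ = (m * Real.Gamma m * G / H) ^ (1 / m))
    (hs₅ : s₅ = (2 * m * Real.Gamma m / G) ^ (1 / m))
    (hsmin : s < min s₄ s₅) :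
    1 - (1 - S * G + S ^ 2 * H) > 0 ∧
    1 - (2 - S * G) + (1 - S * G + S ^ 2 * H) > 0 ∧
    1 + (2 - S * G) + (1 - S * G + S ^ 2 * H) > 0 ∧
    ∀ z : ℂ, z ^ 2 - ((2 - S * G : ℝ) : ℂ) * z + ((1 - S * G + S ^ 2 * H : ℝ) : ℂ) = 0 →
      ‖z‖ < 1 := by
  have hθhd : 0 < θ - h * d := by
    have : 0 < d / (α * K) := by positivity
    linarith
  have hxs_pos : 0 < xs := by
    have : 0 < 1 - c := by linarith
    rw [hxs]; positivity
  have hG_pos : 0 < G := by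
    have := sub_pos_of_one_sub_div_lt (by positivity) hc2
    rw [hG]; exact mul_pos (by positivity) (by linear_combination this)
  have hH_pos : 0 < H := by
    have := sub_pos_of_lt_one_sub_div (by positivity) hc1
    rw [hH]; exact mul_pos (by positivity) (by linear_combination this)
  have hSH : S * H < G := by
    rw [hS]
    refine rpow_div_mul_lt_of_lt_rpow_one_div hs hm0 hG_pos hH_pos ?_
    exact hs₄ ▸ hsmin.trans_le (min_le_left _ _)
  have hSG : S * G < 2 := by
    rw [hS]
    refine rpow_div_mul_lt_of_lt_rpow_one_div hs hm0 two_pos hG_pos ?_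
    rw [mul_comm _ (2 : ℝ), ← mul_assoc, ← hs₅]
    exact hsmin.trans_le (min_le_right _ _)
  obtain ⟨hD, hp1, hpm1⟩ := jury_conditions_of_mul_lt (hS ▸ by positivity) hH_pos hSH hSG
  exact ⟨hD, hp1, hpm1, fun z hz => norm_lt_one_of_quadratic_eq_zero (by linarith) hp1 hpm1 hz⟩

/-- Under θ > θ₁, θ > θ₂, α > 1/(Kh), c₂ < c < c₁ and 0 < s < min(s₄, s₅),
the Jury conditions hold for the characteristic polynomial of the Jacobian of the
discretized map at the interior fixed point, so every root has modulus less than 1. -/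
theorem discretized_interior_stable
    (r K α h d θ c s m S s₄ s₅ xs G H : ℝ)
    (hr : 0 < r) (hK : 0 < K) (hα : 0 < α) (hh : 0 < h) (hd : 0 < d)
    (hθ0 : 0 < θ) (hθlt : θ < 1) (hc0 : 0 < c) (hclt : c < 1)
    (hθ1 : θ > h * d + d / (α * K))
    (hθ2 : θ > h * d * (α * K * h + 1) / (α * K * h - 1))
    (hα' : α > 1 / (K * h))
    (hc2 : c > 1 - (θ + h * d) / (α * K * h * (θ - h * d)))
    (hc1 : c < 1 - d / (α * K * (θ - h * d)))
    (hs : 0 < s) (hm0 : 0 < m) (hm1 : m ≤ 1)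
    (hS : S = s ^ m / (m * Real.Gamma m))
    (hxs : xs = d / (α * (1 - c) * (θ - h * d)))
    (hG : G = (r * xs / (K * θ)) * (θ + h * d - α * h * K * (1 - c) * (θ - h * d)))
    (hH : H = (r * xs * (θ - h * d) / (K * θ)) * (α * K * (1 - c) * (θ - h * d) - d))
    (hs₄ : s₄ = (m * Real.Gamma m * G / H) ^ (1 / m))
    (hs₅ : s₅ = (2 * m * Real.Gamma m / G) ^ (1 / m))
    (hsmin : s < min s₄ s₅) :
    1 - (1 - S * G + S ^ 2 * H) > 0 ∧
    1 - (2 - S * G) + (1 - S * G + S ^ 2 * H) > 0 ∧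
    1 + (2 - S * G) + (1 - S * G + S ^ 2 * H) > 0 ∧
    ∀ z : ℂ, z ^ 2 - ((2 - S * G : ℝ) : ℂ) * z + ((1 - S * G + S ^ 2 * H : ℝ) : ℂ) = 0 →
      ‖z‖ < 1 :=
  discretized_interior_stable_general r K α h d θ c s m S s₄ s₅ xs G H hr hK hα hh hd hθ0 hclt hθ1
    hc2 hc1 hs hm0 hS hxs hG hH hs₄ hs₅ hsmin
end

section
/- Let G, H be real numbers with G > 0 and H > 0, and define φ(S) = √(1 - G S + H S²) for real S. Then φ(G/H) = 1 and φ has derivative G/2 at the point S = G/H. -/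
/-- Transversality condition for the discrete Hopf bifurcation: the modulus
function φ(S) = √(1 - GS + HS²) satisfies φ(G/H) = 1 and φ'(G/H) = G/2. -/
theorem hopf_transversality
    (G H : ℝ) (hG : 0 < G) (hH : 0 < H) :
    Real.sqrt (1 - G * (G / H) + H * (G / H) ^ 2) = 1 ∧
    HasDerivAt (fun S : ℝ => Real.sqrt (1 - G * S + H * S ^ 2)) (G / 2) (G / H) := by
  have hval : 1 - G * (G / H) + H * (G / H) ^ 2 = 1 := by
    field_simp
    ring
  constructor
  · rw [hval, Real.sqrt_one]
  · have hf : HasDerivAt (fun S : ℝ => 1 - G * S + H * S ^ 2)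
        (-G + 2 * H * (G / H)) (G / H) := by
      have h1 : HasDerivAt (fun S : ℝ => 1 - G * S) (-G) (G / H) := by
        simpa using ((hasDerivAt_id (G / H)).const_mul G).const_sub 1
      have h2 : HasDerivAt (fun S : ℝ => H * S ^ 2) (H * (2 * (G / H))) (G / H) := by
        simpa using ((hasDerivAt_pow 2 (G / H)).const_mul H)
      have := h1.add h2
      refine this.congr_deriv ?_
      ring
    have hne : 1 - G * (G / H) + H * (G / H) ^ 2 ≠ 0 := by rw [hval]; norm_num
    have := hf.sqrt hne
    convert this using 1
    rw [hval, Real.sqrt_one]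
    field_simp
    ring
end

section
/- Let G, H be real numbers with G > 0, H > 0, G² < 4H, G² ≠ 2H, and G² ≠ 3H, and set S = G/H. Then every complex root λ of λ² - (2 - S G) λ + 1 = 0 satisfies λⁿ ≠ 1 for each n ∈ {1, 2, 3, 4}. -/
private lemma aux_real_mul (a b : ℝ) (z : ℂ) (hz : z.im ≠ 0)
    (h : (a : ℂ) * z = (b : ℂ)) : a = 0 ∧ b = 0 := by
  have him := congrArg Complex.im h
  simp [Complex.mul_im] at him
  have ha : a = 0 := by
    rcases him with h' | h'
    · exact h'
    · exact absurd h' hz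
  refine ⟨ha, ?_⟩
  rw [ha] at h
  simp at h
  exact_mod_cast h.symm

/-- Nonresonance condition for the discrete Hopf bifurcation: at S = G/H,
with G > 0, H > 0, G² < 4H, G² ≠ 2H and G² ≠ 3H, every complex root λ of
λ² - (2 - SG)λ + 1 = 0 satisfies λⁿ ≠ 1 for n = 1, 2, 3, 4. -/
theorem hopf_nonresonance
    (G H S : ℝ) (hG : 0 < G) (hH : 0 < H) (hdisc : G ^ 2 < 4 * H)
    (h2 : G ^ 2 ≠ 2 * H) (h3 : G ^ 2 ≠ 3 * H)
    (hS : S = G / H) :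
    ∀ z : ℂ, z ^ 2 - ((2 - S * G : ℝ) : ℂ) * z + 1 = 0 →
      ∀ n : ℕ, n ∈ ({1, 2, 3, 4} : Finset ℕ) → z ^ n ≠ 1 := by
  intro z hz n hn
  set t : ℝ := 2 - S * G with ht
  have hSG : S * G = G ^ 2 / H := by rw [hS]; field_simp
  have hGH : 0 < G ^ 2 / H := div_pos (by positivity) hH
  have hGH4 : G ^ 2 / H < 4 := (div_lt_iff₀ hH).mpr (by linarith)
  have htlt : t < 2 := by rw [ht, hSG]; linarith
  have htgt : -2 < t := by rw [ht, hSG]; linarith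
  have ht0 : t ≠ 0 := by
    rw [ht, hSG]
    intro h; apply h2
    have : G ^ 2 / H = 2 := by linarith
    field_simp at this; linarith
  have htm1 : t ≠ -1 := by
    rw [ht, hSG]
    intro h; apply h3
    have : G ^ 2 / H = 3 := by linarith
    field_simp at this; linarith
  -- z is not real
  have him : z.im ≠ 0 := by
    intro h0
    have hzre : z = ((z.re : ℝ) : ℂ) := by
      apply Complex.ext <;> simp [h0]
    rw [hzre] at hz
    have : (((z.re ^ 2 - t * z.re + 1 : ℝ)) : ℂ) = 0 := by
      push_cast; linear_combination hz
    have hr : z.re ^ 2 - t * z.re + 1 = 0 := by exact_mod_cast this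
    have h4t : t ^ 2 < 4 := by nlinarith
    nlinarith [sq_nonneg (2 * z.re - t), hr, h4t]
  have hsq : z ^ 2 = (t : ℂ) * z - 1 := by linear_combination hz
  fin_cases hn <;> intro hp
  · -- n = 1
    simp only [pow_one] at hp
    rw [hp] at him
    simp at him
  · -- n = 2
    rw [hsq] at hp
    have h' : (t : ℂ) * z = ((2 : ℝ) : ℂ) := by push_cast; linear_combination hp
    obtain ⟨ha, hb⟩ := aux_real_mul t 2 z him h'
    norm_num at hb
  · -- n = 3
    have h3' : z ^ 3 = (t : ℂ) * z ^ 2 - z := by ring_nf; linear_combination z * hsq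
    rw [hsq] at h3'
    rw [h3'] at hp
    have h' : ((t ^ 2 - 1 : ℝ) : ℂ) * z = ((1 + t : ℝ) : ℂ) := by
      push_cast; linear_combination hp
    obtain ⟨ha, hb⟩ := aux_real_mul _ _ z him h'
    apply htm1; linarith
  · -- n = 4
    have h4' : z ^ 4 = ((t ^ 2 : ℝ) : ℂ) * z ^ 2 - 2 * (t : ℂ) * z + 1 := by
      push_cast; linear_combination ((t:ℂ) * z - 1 + z^2) * hsq
    rw [hsq] at h4'
    rw [h4'] at hp
    have h' : ((t ^ 3 - 2 * t : ℝ) : ℂ) * z = ((t ^ 2 : ℝ) : ℂ) := by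
      push_cast at hp ⊢; linear_combination hp
    obtain ⟨ha, hb⟩ := aux_real_mul _ _ z him h'
    exact ht0 (by nlinarith)
end
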